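/- arXiv:2307.12712 — 3 statements merged into one kernel-verified Lean document; each statement's English description precedes it below -/
import Mathlib

section
/- Let ω be a principal 2^p-th root of unity in a commutative ring D, let F ∈ D[X], and let ℓ, s be positive integers with 2^ℓ dividing s and (s + 2^ℓ) ≤ 2^p. Define F_{s,ℓ}(X) = F(ω^{[s]_p}·X) mod (X^{2^ℓ} − 1). Then the bit-reversed DFT of F_{s,ℓ} at ω^{2^{p−ℓ}} equals (F(ω^{[s]_p}), F(ω^{[s+1]_p}), …, F(ω^{[s+2^ℓ−1]_p})). -/
/-!
Since `(ω ^ 2 ^ (p - ℓ)) ^ [i]_ℓ` is a `2 ^ ℓ`-th root of unity, it is a root of `X ^ 2 ^ ℓ - 1`,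
so reducing modulo `X ^ 2 ^ ℓ - 1` does not change the value there, which is therefore
`F (ω ^ ([s]_p + 2 ^ (p - ℓ) * [i]_ℓ))`. When `2 ^ ℓ ∣ s` and `i < 2 ^ ℓ`, the binary digits of
`s` and `i` occupy disjoint positions, so `[s + i]_p = [s]_p + [i]_p = [s]_p + 2 ^ (p - ℓ) * [i]_ℓ`.
-/

/-- The length-`p` bit reversal of `i`. -/
def bitrev (p i : ℕ) : ℕ := ∑ j ∈ Finset.range p, (i / 2 ^ j % 2) * 2 ^ (p - 1 - j)

namespace Nat

theorem div_two_pow_mod_two_add_of_dvd {ℓ s i : ℕ} (hdvd : 2 ^ ℓ ∣ s) (hi : i < 2 ^ ℓ) (j : ℕ) :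
    (s + i) / 2 ^ j % 2 = s / 2 ^ j % 2 + i / 2 ^ j % 2 := by
  obtain ⟨k, rfl⟩ := hdvd
  rcases lt_or_ge j ℓ with hj | hj
  · have hsplit : 2 ^ ℓ * k = 2 ^ j * (2 * (2 ^ (ℓ - j - 1) * k)) := by
      rw [← mul_assoc, ← mul_assoc, ← pow_succ, ← pow_add]
      congr 2
      omega
    have hpos : 0 < 2 ^ j := Nat.two_pow_pos j
    rw [hsplit, Nat.mul_add_div hpos, Nat.mul_div_cancel_left _ hpos]
    omega
  · have hi0 : i / 2 ^ j = 0 := Nat.div_eq_of_lt (hi.trans_le (Nat.pow_le_pow_right two_pos hj))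
    have hpow : 2 ^ j = 2 ^ ℓ * 2 ^ (j - ℓ) := by rw [← pow_add, Nat.add_sub_cancel' hj]
    have hpos : 0 < 2 ^ ℓ := Nat.two_pow_pos ℓ
    rw [hi0, hpow, ← Nat.div_div_eq_div_mul, ← Nat.div_div_eq_div_mul, Nat.mul_add_div hpos,
      Nat.div_eq_of_lt hi, Nat.mul_div_cancel_left _ hpos]
    simp

end Nat

theorem bitrev_add_of_dvd (p : ℕ) {ℓ s i : ℕ} (hdvd : 2 ^ ℓ ∣ s) (hi : i < 2 ^ ℓ) :
    bitrev p (s + i) = bitrev p s + bitrev p i := by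
  simp only [bitrev, ← Finset.sum_add_distrib, ← add_mul,
    Nat.div_two_pow_mod_two_add_of_dvd hdvd hi]

theorem bitrev_eq_two_pow_mul_bitrev {ℓ p i : ℕ} (hlp : ℓ ≤ p) (hi : i < 2 ^ ℓ) :
    bitrev p i = 2 ^ (p - ℓ) * bitrev ℓ i := by
  have hhigh : ∀ j ∈ Finset.range p, j ∉ Finset.range ℓ → i / 2 ^ j % 2 * 2 ^ (p - 1 - j) = 0 :=
    fun j _ hj => by
      rw [Nat.div_eq_of_lt (hi.trans_le (Nat.pow_le_pow_right two_pos (by simpa using hj)))]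
      simp
  rw [bitrev, ← Finset.sum_subset (Finset.range_subset_range.2 hlp) hhigh, bitrev, Finset.mul_sum]
  refine Finset.sum_congr rfl fun j hj => ?_
  rw [Finset.mem_range] at hj
  rw [mul_left_comm, ← pow_add]
  congr 3
  omega

namespace Polynomial

theorem eval_modByMonic_eq_self_of_root {R : Type*} [CommRing R] {p q : R[X]} {x : R}
    (hx : q.eval x = 0) : (p %ₘ q).eval x = p.eval x :=
  eval₂_modByMonic_eq_self_of_root hx

end Polynomial

open Polynomial in
theorem partial_tft_lemma_general {D : Type*} [CommRing D] (p : ℕ) (ω : D)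
    (hω : ω ^ 2 ^ p = 1)
    (F : D[X]) (ℓ s : ℕ)
    (hdvd : 2 ^ ℓ ∣ s) (hle : s + 2 ^ ℓ ≤ 2 ^ p) :
    ∀ i, i < 2 ^ ℓ →
      ((F.comp (C (ω ^ bitrev p s) * X)) %ₘ (X ^ 2 ^ ℓ - 1)).eval
          ((ω ^ 2 ^ (p - ℓ)) ^ bitrev ℓ i) =
        F.eval (ω ^ bitrev p (s + i)) := by
  intro i hi
  have hlp : ℓ ≤ p := (Nat.pow_le_pow_iff_right one_lt_two).1 (le_of_add_le_right hle)
  have hroot : (X ^ 2 ^ ℓ - 1 : D[X]).eval ((ω ^ 2 ^ (p - ℓ)) ^ bitrev ℓ i) = 0 := by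
    rw [eval_sub, eval_pow, eval_X, eval_one, ← pow_mul, ← pow_mul, mul_comm, mul_assoc,
      ← pow_add, Nat.add_sub_cancel' hlp, mul_comm, pow_mul, hω, one_pow, sub_self]
  rw [eval_modByMonic_eq_self_of_root hroot, eval_comp, eval_mul, eval_C, eval_X, ← pow_mul,
    ← pow_add, ← bitrev_eq_two_pow_mul_bitrev hlp hi, ← bitrev_add_of_dvd p hdvd hi]

open Polynomial in
theorem partial_tft_lemma {D : Type*} [CommRing D] (p : ℕ) (ω : D)
    (hω : ω ^ 2 ^ p = 1)
    (hprin : ∀ i, 1 ≤ i → i < 2 ^ p → ∑ j ∈ Finset.range (2 ^ p), ω ^ (i * j) = 0)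
    (F : D[X]) (ℓ s : ℕ) (hℓ : 0 < ℓ) (hs : 0 < s)
    (hdvd : 2 ^ ℓ ∣ s) (hle : s + 2 ^ ℓ ≤ 2 ^ p) :
    ∀ i, i < 2 ^ ℓ →
      ((F.comp (C (ω ^ bitrev p s) * X)) %ₘ (X ^ 2 ^ ℓ - 1)).eval
          ((ω ^ 2 ^ (p - ℓ)) ^ bitrev ℓ i) =
        F.eval (ω ^ bitrev p (s + i)) :=
  partial_tft_lemma_general p ω hω F ℓ s hdvd hle
end

section
/- If s, i < 2^p, i < 2^ℓ, and 2^ℓ divides s, then [s]_p + [i]_p = [s+i]_p, where [·]_p is the length-p bit reversal. -/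
/-!
Bit reversal is a fixed linear combination of the bits `(n.testBit j).toNat`, and for booleans
`(x || y).toNat + (x && y).toNat = x.toNat + y.toNat`; hence `bitrev p` is additive on numbers
with disjoint bits. For `s = 2 ^ ℓ * a` and `i < 2 ^ ℓ` the bits are disjoint, and then
`s + i = s ||| i`.
-/
theorem bitrev_eq_sum_testBit (p n : ℕ) :
    bitrev p n = ∑ j ∈ Finset.range p, (n.testBit j).toNat * 2 ^ (p - 1 - j) := by
  simp only [bitrev, Nat.toNat_testBit]

theorem bitrev_zero (p : ℕ) : bitrev p 0 = 0 := by
  simp [bitrev]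

theorem bitrev_or_add_bitrev_and (p a b : ℕ) :
    bitrev p (a ||| b) + bitrev p (a &&& b) = bitrev p a + bitrev p b := by
  simp only [bitrev_eq_sum_testBit, ← Finset.sum_add_distrib, ← add_mul, Nat.testBit_or,
    Nat.testBit_and]
  refine Finset.sum_congr rfl fun j _ => ?_
  cases a.testBit j <;> cases b.testBit j <;> rfl

theorem bitrev_or_of_and_eq_zero {a b : ℕ} (h : a &&& b = 0) (p : ℕ) :
    bitrev p (a ||| b) = bitrev p a + bitrev p b := by
  rw [← bitrev_or_add_bitrev_and, h, bitrev_zero, add_zero]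

theorem Nat.two_pow_mul_and_eq_zero_of_lt {ℓ b : ℕ} (hb : b < 2 ^ ℓ) (a : ℕ) :
    2 ^ ℓ * a &&& b = 0 := by
  refine Nat.eq_of_testBit_eq fun j => ?_
  rw [Nat.testBit_and, Nat.testBit_two_pow_mul, Nat.zero_testBit]
  by_cases hj : ℓ ≤ j
  · rw [Nat.testBit_lt_two_pow (hb.trans_le (Nat.pow_le_pow_right two_pos hj)), Bool.and_false]
  · simp [hj]

theorem bitrev_add_general (p ℓ s i : ℕ) (hi : i < 2 ^ ℓ)
    (hdvd : 2 ^ ℓ ∣ s) :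
    bitrev p s + bitrev p i = bitrev p (s + i) := by
  obtain ⟨a, rfl⟩ := hdvd
  rw [Nat.two_pow_add_eq_or_of_lt hi,
    bitrev_or_of_and_eq_zero (Nat.two_pow_mul_and_eq_zero_of_lt hi a)]

theorem bitrev_add (p ℓ s i : ℕ) (hs : s < 2 ^ p) (hi' : i < 2 ^ p) (hi : i < 2 ^ ℓ)
    (hdvd : 2 ^ ℓ ∣ s) :
    bitrev p s + bitrev p i = bitrev p (s + i) :=
  bitrev_add_general p ℓ s i hi hdvd
end

section
/- Let F be a field and α ∈ F^{t×m} a matrix with at least one row that is neither zero nor a standard basis vector. Suppose k is the minimal number of elementary operations (variable-switch, variable-multiply by a nonzero constant, variable-addition aᵢ ← aᵢ + λ·aⱼ) needed to compute all t coordinates of α·a when arbitrary extra registers are allowed. Then any elementary program computing all t coordinates of α·a using only the m registers of a (each value of α·a appearing in some register at some time, and a restored at the end) requires at least k+1 elementary operations. -/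
/-- Elementary operations on registers indexed by `ι`: swapping two registers,
multiplying a register by a nonzero constant, and adding a constant multiple of
one register to another. -/
inductive ElemOp (F : Type*) [Field F] (ι : Type*) where
  | swap (i j : ι) : ElemOp F ι
  | scale (i : ι) (lam : F) (hlam : lam ≠ 0) : ElemOp F ι
  | addmul (i j : ι) (lam : F) (hij : i ≠ j) : ElemOp F ι

/-- The action of an elementary operation on a register state. -/
def ElemOp.apply {F ι : Type*} [Field F] [DecidableEq ι] :
    ElemOp F ι → (ι → F) → (ι → F)
  | .swap i j, v => v ∘ Equiv.swap i j
  | .scale i lam _, v => Function.update v i (lam * v i)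
  | .addmul i j lam _, v => Function.update v i (v i + lam * v j)

/-- Running an elementary program on a register state. -/
def runProg {F ι : Type*} [Field F] [DecidableEq ι]
    (P : List (ElemOp F ι)) (v : ι → F) : ι → F :=
  P.foldl (fun s op => op.apply s) v

/-- `P` computes all the coordinates of `α·a`: each coordinate appears in some
register after some prefix of the execution, uniformly in the input `a`,
where `init a` is the initial register state on input `a`. -/
def Computes {F : Type*} [Field F] {t m : ℕ} {ι : Type*} [DecidableEq ι]
    (P : List (ElemOp F ι)) (α : Matrix (Fin t) (Fin m) F)
    (init : (Fin m → F) → ι → F) : Prop :=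
  ∀ ℓ : Fin t, ∃ p ≤ P.length, ∃ r : ι,
    ∀ a : Fin m → F, runProg (P.take p) (init a) r = ∑ j, α ℓ j * a j

def ElemOp.emap {F : Type*} [Field F] {ι κ : Type*} (e : ι ≃ κ) :
    ElemOp F ι → ElemOp F κ
  | .swap i j => .swap (e i) (e j)
  | .scale i lam h => .scale (e i) lam h
  | .addmul i j lam h => .addmul (e i) (e j) lam (fun hc => h (e.injective hc))

lemma ElemOp.emap_apply {F ι κ : Type*} [Field F] [DecidableEq ι] [DecidableEq κ]
    (e : ι ≃ κ) (op : ElemOp F ι) (v : κ → F) :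
    (op.emap e).apply v = (op.apply (v ∘ e)) ∘ e.symm := by
  cases op with
  | swap i j =>
      funext x
      simp [ElemOp.apply, ElemOp.emap, Equiv.swap_apply_def, Equiv.symm_apply_eq,
        apply_ite e, apply_ite v]
  | scale i lam h =>
      funext x
      simp only [ElemOp.apply, ElemOp.emap, Function.comp_apply, Function.update_apply,
        Equiv.symm_apply_eq, Equiv.apply_symm_apply]
  | addmul i j lam h =>
      funext x
      simp only [ElemOp.apply, ElemOp.emap, Function.comp_apply, Function.update_apply,
        Equiv.symm_apply_eq, Equiv.apply_symm_apply]

lemma runProg_cons {F ι : Type*} [Field F] [DecidableEq ι]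
    (op : ElemOp F ι) (P : List (ElemOp F ι)) (v : ι → F) :
    runProg (op :: P) v = runProg P (op.apply v) := rfl

lemma runProg_emap {F ι κ : Type*} [Field F] [DecidableEq ι] [DecidableEq κ]
    (e : ι ≃ κ) (P : List (ElemOp F ι)) (v : κ → F) :
    runProg (P.map (ElemOp.emap e)) v = (runProg P (v ∘ e)) ∘ e.symm := by
  induction P generalizing v with
  | nil => funext x; simp [runProg]
  | cons op P ih =>
      rw [List.map_cons, runProg_cons, runProg_cons, ih, ElemOp.emap_apply]
      have h2 : (op.apply (v ∘ ⇑e) ∘ ⇑e.symm) ∘ ⇑e = op.apply (v ∘ ⇑e) := by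
        funext z; simp
      rw [h2]

lemma row_eq_single {F : Type*} [Field F] {m : ℕ} (α : Fin m → F) (r : Fin m)
    (h : ∀ a : Fin m → F, a r = ∑ j, α j * a j) : α = Pi.single r 1 := by
  funext j
  have := h (Pi.single j 1)
  simp [Pi.single_apply, mul_ite, eq_comm] at this ⊢
  exact this

theorem inplace_needs_one_more_op {F : Type*} [Field F] {t m : ℕ}
    (α : Matrix (Fin t) (Fin m) F)
    (hrow : ∃ ℓ : Fin t, α ℓ ≠ 0 ∧ ∀ j : Fin m, α ℓ ≠ Pi.single j 1)
    (k : ℕ)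
    -- `k` is the minimal number of elementary operations needed to compute
    -- `α·a` when arbitrarily many extra registers are allowed
    (hex : ∃ (r : ℕ) (P : List (ElemOp F (Fin m ⊕ Fin r))),
      P.length = k ∧ Computes P α (fun a => Sum.elim a 0))
    (hmin : ∀ (r : ℕ) (P : List (ElemOp F (Fin m ⊕ Fin r))),
      Computes P α (fun a => Sum.elim a 0) → k ≤ P.length)
    -- `Q` is an in-place program on the `m` input registers, computing `α·a`
    -- and restoring the input afterwards
    (Q : List (ElemOp F (Fin m))) (hQ : Computes Q α (fun a => a))
    (hrestore : ∀ a : Fin m → F, runProg Q a = a) :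
    k + 1 ≤ Q.length := by
  obtain ⟨ℓ₀, h0, h1⟩ := hrow
  -- Q is nonempty
  have hQlen : 1 ≤ Q.length := by
    by_contra hlen
    push_neg at hlen
    obtain ⟨p, hp, r, h⟩ := hQ ℓ₀
    have hp0 : p = 0 := by omega
    subst hp0
    have hval : ∀ a : Fin m → F, a r = ∑ j, α ℓ₀ j * a j := by
      intro a
      simpa [runProg] using h a
    exact h1 r (row_eq_single (α ℓ₀) r hval)
  set n := Q.length - 1 with hn
  -- the truncated program still computes α
  have hcomp : Computes (Q.take n) α (fun a => a) := by
    intro ℓ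
    obtain ⟨p, hp, r, h⟩ := hQ ℓ
    by_cases hpn : p ≤ n
    · refine ⟨p, ?_, r, ?_⟩
      · simp only [List.length_take]
        omega
      · intro a
        rw [List.take_take, min_eq_left hpn]
        exact h a
    · -- p = Q.length, so the value sits in the final (= initial) state
      have hpQ : p = Q.length := by omega
      refine ⟨0, by omega, r, ?_⟩
      intro a
      have := h a
      rw [hpQ, List.take_length, hrestore a] at this
      simpa [runProg] using this
  -- transport to a program with zero extra registers
  set e : (Fin m ⊕ Fin 0) ≃ Fin m := Equiv.sumEmpty (Fin m) (Fin 0) with he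
  set P : List (ElemOp F (Fin m ⊕ Fin 0)) :=
    (Q.take n).map (ElemOp.emap e.symm) with hP
  have hcompP : Computes P α (fun a => Sum.elim a 0) := by
    intro ℓ
    obtain ⟨p, hp, r, h⟩ := hcomp ℓ
    refine ⟨p, by simpa [hP] using hp, Sum.inl r, ?_⟩
    intro a
    have hPt : P.take p = ((Q.take n).take p).map (ElemOp.emap e.symm) := by
      rw [hP, ← List.map_take]
    rw [hPt, runProg_emap]
    have ha : (Sum.elim a (0 : Fin 0 → F)) ∘ ⇑e.symm = a := by
      funext i
      simp [he]
    rw [ha]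
    have hr : e.symm.symm (Sum.inl r) = r := by simp [he]
    simp only [Function.comp_apply, hr]
    exact h a
  have hk : k ≤ P.length := hmin 0 P hcompP
  have hPlen : P.length = n := by
    simp [hP, List.length_take]
    omega
  omega
end
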